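/- Let A = (a_{ij}) ∈ ℝ^{n×n} be an irreducible symmetric Z-matrix with eigenvalues λ₁ ≤ λ₂ ≤ … ≤ λₙ such that λ₂ ≥ a_{ii} for every i ∈ {1, …, n}. Then λ₂·I − A is copositive and there exists an eigenvector v¹ ∈ ℝⁿ₊ of A corresponding to the eigenvalue λ₁. -/

import Mathlib

open scoped InnerProductSpace

/-- Multiplication of an `n × n` real matrix with a vector of `EuclideanSpace ℝ (Fin n)`. -/
noncomputable def mulVecE {n : ℕ} (A : Matrix (Fin n) (Fin n) ℝ)
    (x : EuclideanSpace ℝ (Fin n)) : EuclideanSpace ℝ (Fin n) :=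
  WithLp.toLp 2 (fun i => ∑ j, A i j * x j)

/-- A matrix `A` is reducible if for some permutation `σ` of the indices and some `m` with
`0 < m < n`, the permuted matrix `(i, j) ↦ A (σ i) (σ j)` has the block form
`[[B₁₁, B₁₂], [0, B₂₂]]` with `B₁₁` of size `m × m`; it is irreducible otherwise. -/
def Matrix.IsIrreducibleBlock {n : ℕ} (A : Matrix (Fin n) (Fin n) ℝ) : Prop :=
  ¬ ∃ (σ : Equiv.Perm (Fin n)) (m : ℕ), 0 < m ∧ m < n ∧
      ∀ i j : Fin n, m ≤ (i : ℕ) → (j : ℕ) < m → A (σ i) (σ j) = 0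

/-!
`μ₁ • 1 - A` is entrywise nonnegative (off the diagonal because `A` is a Z-matrix, on it because
`μ₁ ≥ aᵢᵢ`), hence copositive. For a unit eigenvector `v` of `μ₀`, passing to `|v|` can only
decrease the quadratic form of a Z-matrix, so `|v|` still attains the minimum `μ₀` of the
Rayleigh quotient; expanding in the orthonormal eigenbasis, a minimiser lies in the
`μ₀`-eigenspace.
-/

open Matrix

lemma mulVecE_eq_toEuclideanLin {n : ℕ} (A : Matrix (Fin n) (Fin n) ℝ) :
    mulVecE A = toEuclideanLin A := rfl

lemma inner_mulVecE_self {n : ℕ} (A : Matrix (Fin n) (Fin n) ℝ) (x : EuclideanSpace ℝ (Fin n)) :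
    ⟪mulVecE A x, x⟫_ℝ = x.ofLp ⬝ᵥ A *ᵥ x.ofLp := by
  rw [EuclideanSpace.inner_eq_star_dotProduct, star_trivial]; rfl

section ZMatrix

variable {ι : Type*}

lemma smul_one_sub_apply_nonneg [DecidableEq ι] {A : Matrix ι ι ℝ} {c : ℝ}
    (hZ : ∀ i j, i ≠ j → A i j ≤ 0) (hdiag : ∀ i, A i i ≤ c) (i j : ι) :
    0 ≤ (c • (1 : Matrix ι ι ℝ) - A) i j := by
  rcases eq_or_ne i j with rfl | hij
  · simpa using hdiag i
  · simpa [one_apply_ne hij] using hZ i j hij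

variable [Fintype ι]

lemma dotProduct_mulVec_nonneg_of_nonneg {B : Matrix ι ι ℝ} (hB : ∀ i j, 0 ≤ B i j)
    {x : ι → ℝ} (hx : 0 ≤ x) : 0 ≤ x ⬝ᵥ B *ᵥ x :=
  dotProduct_nonneg_of_nonneg hx fun i => Finset.sum_nonneg fun j _ => mul_nonneg (hB i j) (hx j)

lemma abs_dotProduct_mulVec_abs_le {A : Matrix ι ι ℝ} (hZ : ∀ i j, i ≠ j → A i j ≤ 0)
    (x : ι → ℝ) : |x| ⬝ᵥ A *ᵥ |x| ≤ x ⬝ᵥ A *ᵥ x := by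
  simp only [dotProduct, mulVec, Finset.mul_sum, Pi.abs_apply]
  refine Finset.sum_le_sum fun i _ => Finset.sum_le_sum fun j _ => ?_
  rcases eq_or_ne i j with rfl | hij
  · rw [mul_left_comm, abs_mul_abs_self, mul_left_comm]
  · have : x i * x j ≤ |x i| * |x j| := abs_mul (x i) (x j) ▸ le_abs_self _
    nlinarith [hZ i j hij]

end ZMatrix

section Eigenbasis

open scoped RealInnerProductSpace

variable {ι E : Type*} [Fintype ι] [NormedAddCommGroup E] [InnerProductSpace ℝ E]
  (b : OrthonormalBasis ι ℝ E) {T : E →ₗ[ℝ] E} {μ : ι → ℝ} (hT : ∀ i, T (b i) = μ i • b i)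
include hT

lemma apply_eq_sum_of_eigenbasis (x : E) : T x = ∑ i, (μ i * ⟪b i, x⟫) • b i := by
  conv_lhs => rw [← b.sum_repr' x]
  simp only [map_sum, map_smul, hT, smul_smul, mul_comm]

lemma inner_apply_self_eq_sum_of_eigenbasis (x : E) : ⟪T x, x⟫ = ∑ i, μ i * ⟪b i, x⟫ ^ 2 := by
  simp only [apply_eq_sum_of_eigenbasis b hT, sum_inner, real_inner_smul_left, sq, mul_assoc]

lemma apply_eq_smul_of_inner_apply_self_le {m : ℝ} (hm : ∀ i, m ≤ μ i) {x : E}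
    (hx : ⟪T x, x⟫ ≤ m * ‖x‖ ^ 2) : T x = m • x := by
  have hnonneg : ∀ i ∈ Finset.univ, 0 ≤ (μ i - m) * ⟪b i, x⟫ ^ 2 :=
    fun i _ => mul_nonneg (sub_nonneg.2 (hm i)) (sq_nonneg _)
  have hsum : ∑ i, (μ i - m) * ⟪b i, x⟫ ^ 2 = 0 := by
    refine le_antisymm ?_ (Finset.sum_nonneg hnonneg)
    simp only [sub_mul, Finset.sum_sub_distrib, ← Finset.mul_sum, b.sum_sq_inner_right,
      ← inner_apply_self_eq_sum_of_eigenbasis b hT]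
    linarith
  rw [apply_eq_sum_of_eigenbasis b hT]
  conv_rhs => rw [← b.sum_repr' x, Finset.smul_sum]
  refine Finset.sum_congr rfl fun i hi => ?_
  rw [smul_smul]
  rcases mul_eq_zero.1 ((Finset.sum_eq_zero_iff_of_nonneg hnonneg).1 hsum i hi) with h | h
  · rw [sub_eq_zero.1 h]
  · rw [pow_eq_zero_iff two_ne_zero |>.1 h, mul_zero, mul_zero]

end Eigenbasis

/-- Let `A` be an irreducible symmetric Z-matrix (`n ≥ 2`) with an orthonormal basis of
eigenvectors and corresponding eigenvalues `μ₀ ≤ μ₁ ≤ … ≤ μₙ₋₁` such that `μ₁ ≥ Aᵢᵢ` for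
every `i`.  Then `μ₁·I - A` is copositive and there exists a nonzero eigenvector `w ∈ ℝⁿ₊`
of `A` corresponding to the smallest eigenvalue `μ₀`. -/
theorem irreducible_Z_matrix_copositive_and_nonneg_eigenvector {n : ℕ} (hn : 2 ≤ n)
    (A : Matrix (Fin n) (Fin n) ℝ)
    (hZ : ∀ i j : Fin n, i ≠ j → A i j ≤ 0)
    (v : Fin n → EuclideanSpace ℝ (Fin n)) (hv : Orthonormal ℝ v)
    (μ : Fin n → ℝ) (heig : ∀ i, mulVecE A (v i) = μ i • v i) (hmono : Monotone μ)
    (hdiag : ∀ i : Fin n, A i i ≤ μ ⟨1, by omega⟩) :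
    (∀ x : EuclideanSpace ℝ (Fin n), (∀ i, 0 ≤ x i) →
      0 ≤ ⟪mulVecE (μ ⟨1, by omega⟩ • (1 : Matrix (Fin n) (Fin n) ℝ) - A) x, x⟫_ℝ) ∧
    ∃ w : EuclideanSpace ℝ (Fin n), w ≠ 0 ∧ (∀ i, 0 ≤ w i) ∧
      mulVecE A w = μ ⟨0, by omega⟩ • w := by
  refine ⟨fun x hx => ?_, ?_⟩
  · rw [inner_mulVecE_self]
    exact dotProduct_mulVec_nonneg_of_nonneg (smul_one_sub_apply_nonneg hZ hdiag) hx
  set i₀ : Fin n := ⟨0, by omega⟩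
  let b : OrthonormalBasis (Fin n) ℝ (EuclideanSpace ℝ (Fin n)) :=
    .mk hv (hv.linearIndependent.span_eq_top_of_card_eq_finrank' (by simp)).ge
  have hb : ⇑b = v := OrthonormalBasis.coe_mk _ _
  set w : EuclideanSpace ℝ (Fin n) := WithLp.toLp 2 |(v i₀).ofLp|
  have hw : ‖w‖ = 1 := by
    rw [← hv.1 i₀, EuclideanSpace.norm_eq, EuclideanSpace.norm_eq]
    simp [w]
  refine ⟨w, norm_ne_zero_iff.1 (hw ▸ one_ne_zero), fun i => abs_nonneg _, ?_⟩
  rw [mulVecE_eq_toEuclideanLin]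
  refine apply_eq_smul_of_inner_apply_self_le b (fun i => by rw [hb]; exact heig i)
    (fun i => hmono (Nat.zero_le _)) ?_
  calc ⟪mulVecE A w, w⟫_ℝ
      = |(v i₀).ofLp| ⬝ᵥ A *ᵥ |(v i₀).ofLp| := inner_mulVecE_self A w
    _ ≤ (v i₀).ofLp ⬝ᵥ A *ᵥ (v i₀).ofLp := abs_dotProduct_mulVec_abs_le hZ _
    _ = ⟪mulVecE A (v i₀), v i₀⟫_ℝ := (inner_mulVecE_self A _).symm
    _ = μ i₀ * ‖w‖ ^ 2 := by
      rw [heig, real_inner_smul_left, real_inner_self_eq_norm_sq, hv.1 i₀, hw]
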